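/- Let c assign a positive real cost c(i,j) to each pair (i,j) with 1 ≤ i < j ≤ n and each pair (k,n+1) with 1 ≤ k ≤ n. Then the minimum of the total cost Σ_{(i,j)∈Λ} c(i,j) over all index sets Λ whose pattern subspace B_Λ generates se(n) as a Lie algebra equals (the minimum total edge weight of a spanning tree of the complete graph on {1,...,n} with edge weights c(i,j)) plus min_{1≤k≤n} c(k,n+1). -/

import Mathlib

open Matrix

/-!
Common setup: real (n+1)×(n+1) matrices (rows/columns indexed by `Fin (n+1)`,
where index `i : Fin n` cast via `Fin.castSucc` plays the role of `i ∈ {1,…,n}`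
and `Fin.last n` plays the role of the index `n+1`), the Lie bracket
`⁅A,B⁆ = A*B - B*A`, the matrices `Ω̃_{ij}` and `E_{k,n+1}`, the Lie algebra
`se(n)`, index sets `Λ`, pattern subspaces `B_Λ`, graphs with solid/broken
edges, the one-step transitive closure, and derived distributions.
-/

/-- The ambient space of real (n+1)×(n+1) matrices. -/
abbrev Mat (n : ℕ) := Matrix (Fin (n + 1)) (Fin (n + 1)) ℝ

/-- `Ω̃_{ij}`: 1 in entry (i,j), −1 in entry (j,i), 0 elsewhere (indices among 1,…,n). -/
def Omega {n : ℕ} (i j : Fin n) : Mat n :=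
  Matrix.single i.castSucc j.castSucc 1 - Matrix.single j.castSucc i.castSucc 1

/-- `E_{k,n+1}`: 1 in entry (k, n+1), 0 elsewhere. -/
def Ecol {n : ℕ} (k : Fin n) : Mat n :=
  Matrix.single k.castSucc (Fin.last n) 1

/-- The set se(n): matrices whose (n+1)-th row is zero and with
`M(i,j) = −M(j,i)` for all 1 ≤ i,j ≤ n. -/
def seSet (n : ℕ) : Set (Mat n) :=
  {M | (∀ j, M (Fin.last n) j = 0) ∧
    ∀ i j : Fin n, M i.castSucc j.castSucc = - M j.castSucc i.castSucc}

/-- se(n) as a real subspace of the (n+1)×(n+1) matrices. -/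
def seL (n : ℕ) : Submodule ℝ (Mat n) where
  carrier := seSet n
  add_mem' := by
    rintro a b ⟨ha1, ha2⟩ ⟨hb1, hb2⟩
    refine ⟨fun j => ?_, fun i j => ?_⟩
    · simp [Matrix.add_apply, ha1 j, hb1 j]
    · simp only [Matrix.add_apply, ha2 i j, hb2 i j]; ring
  zero_mem' := by
    refine ⟨fun j => ?_, fun i j => ?_⟩ <;> simp
  smul_mem' := by
    rintro c a ⟨ha1, ha2⟩
    refine ⟨fun j => ?_, fun i j => ?_⟩
    · simp [Matrix.smul_apply, ha1 j]
    · simp only [Matrix.smul_apply, ha2 i j, smul_neg]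

/-- Kronecker delta (real-valued). -/
def kron {n : ℕ} (p q : Fin n) : ℝ := if p = q then 1 else 0

/-- An index set Λ: a set of pairs (p,q) with p < q, i.e. a subset of
`{(i,j) : 1 ≤ i < j ≤ n} ∪ {(k, n+1) : 1 ≤ k ≤ n}`. -/
def IndexSet {n : ℕ} (Λ : Set (Fin (n + 1) × Fin (n + 1))) : Prop :=
  ∀ e ∈ Λ, e.1 < e.2

/-- The generating set `{Ω̃_{ij} : (i,j) ∈ Λ, j ≤ n} ∪ {E_{k,n+1} : (k,n+1) ∈ Λ}`. -/
def genSet {n : ℕ} (Λ : Set (Fin (n + 1) × Fin (n + 1))) : Set (Mat n) :=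
  {M | (∃ i j : Fin n, (i.castSucc, j.castSucc) ∈ Λ ∧ M = Omega i j) ∨
    (∃ k : Fin n, (k.castSucc, Fin.last n) ∈ Λ ∧ M = Ecol k)}

/-- The pattern subspace `B_Λ`. -/
def BLam {n : ℕ} (Λ : Set (Fin (n + 1) × Fin (n + 1))) : Submodule ℝ (Mat n) :=
  Submodule.span ℝ (genSet Λ)

attribute [local instance] LieRing.ofAssociativeRing

/-- `B_Λ` generates `se(n)` as a Lie algebra: the smallest real subspace containing
`B_Λ` and closed under the bracket (i.e. the Lie subalgebra generated by `B_Λ`)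
equals `se(n)`. -/
def GeneratesSE (n : ℕ) (Λ : Set (Fin (n + 1) × Fin (n + 1))) : Prop :=
  (LieSubalgebra.lieSpan ℝ (Mat n) (BLam Λ : Set (Mat n)) : Set (Mat n)) = seSet n

/-- A graph on vertices {1,…,n+1} recorded by its solid and broken adjacency relations. -/
structure SBGraph (n : ℕ) where
  solid : Fin (n + 1) → Fin (n + 1) → Prop
  broken : Fin (n + 1) → Fin (n + 1) → Prop

/-- A well-formed solid/broken graph: simple and symmetric; solid edges have both
endpoints among 1,…,n, broken edges have one endpoint equal to n+1. -/
def SBGraph.Good {n : ℕ} (G : SBGraph n) : Prop :=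
  (∀ p q, G.solid p q → G.solid q p) ∧ (∀ p q, G.solid p q → p ≠ q) ∧
  (∀ p q, G.solid p q → p ≠ Fin.last n ∧ q ≠ Fin.last n) ∧
  (∀ p q, G.broken p q → G.broken q p) ∧ (∀ p q, G.broken p q → p ≠ q) ∧
  (∀ p q, G.broken p q → p = Fin.last n ∨ q = Fin.last n)

/-- The one-step closure: for distinct vertices i,j,k, add a solid edge {i,k} whenever
{i,j} and {j,k} are both solid, and a broken edge {i,k} whenever one of {i,j},{j,k} is
solid and the other is broken (nothing is added when both are broken). -/
def SBGraph.step {n : ℕ} (G : SBGraph n) : SBGraph n where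
  solid := fun i k => G.solid i k ∨
    (∃ j, i ≠ j ∧ j ≠ k ∧ i ≠ k ∧ G.solid i j ∧ G.solid j k)
  broken := fun i k => G.broken i k ∨
    (∃ j, i ≠ j ∧ j ≠ k ∧ i ≠ k ∧
      ((G.solid i j ∧ G.broken j k) ∨ (G.broken i j ∧ G.solid j k)))

/-- The l-th transitive closure `G^{(l)}`. -/
def SBGraph.closure {n : ℕ} (G : SBGraph n) (l : ℕ) : SBGraph n :=
  (fun H => SBGraph.step H)^[l] G

/-- `G` is the complete graph on the n+1 vertices: every pair of distinct vertices
is joined by a (solid or broken) edge. -/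
def SBGraph.IsComplete {n : ℕ} (G : SBGraph n) : Prop :=
  ∀ p q : Fin (n + 1), p ≠ q → G.solid p q ∨ G.broken p q

/-- The graph `G(B_Λ)` associated with a pattern: solid edges {i,j} for (i,j) ∈ Λ with
j ≤ n, broken edges {k,n+1} for (k,n+1) ∈ Λ. -/
def patternGraph {n : ℕ} (Λ : Set (Fin (n + 1) × Fin (n + 1))) : SBGraph n where
  solid := fun p q => ∃ i j : Fin n, (i.castSucc, j.castSucc) ∈ Λ ∧
    ((p = i.castSucc ∧ q = j.castSucc) ∨ (p = j.castSucc ∧ q = i.castSucc))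
  broken := fun p q => ∃ k : Fin n, (k.castSucc, Fin.last n) ∈ Λ ∧
    ((p = k.castSucc ∧ q = Fin.last n) ∨ (p = Fin.last n ∧ q = k.castSucc))

/-- One step of the derived-distribution construction:
`D ↦ D + span{[A₁,A₂] : A₁,A₂ ∈ D}`. -/
def derivedStep {n : ℕ} (D : Submodule ℝ (Mat n)) : Submodule ℝ (Mat n) :=
  D ⊔ Submodule.span ℝ {M | ∃ A B, A ∈ D ∧ B ∈ D ∧ M = A * B - B * A}

/-- The i-th derived distribution `D^{(i)}`. -/
def derivedIter {n : ℕ} (D : Submodule ℝ (Mat n)) (i : ℕ) : Submodule ℝ (Mat n) :=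
  (fun S => derivedStep S)^[i] D


/-!
`B_Λ` generates `se(n)` exactly when the solid edges of `Λ` form a connected graph on
`{1, …, n}` and `Λ` contains a broken edge `(k, n+1)`. Sufficiency: `⁅Ω̃_{ij}, Ω̃_{jk}⁆ = Ω̃_{ik}`
spreads the solid edges along paths to all `Ω̃_{ij}`, and `⁅Ω̃_{ik}, E_{k,n+1}⁆ = E_{i,n+1}` then
gives all `E_{i,n+1}`. Necessity: the generated Lie algebra consists of block triangular matrices
for any block function making the generators block triangular, and a disconnected solid graph or
a missing broken edge yields a block function for which some element of `se(n)` is not.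
Since costs are positive, a cheapest generating `Λ` is a spanning tree plus one broken edge.
-/

open SimpleGraph

section Matrices

variable {n : ℕ}

lemma omega_self (i : Fin n) : Omega i i = 0 := sub_self _

lemma omega_swap (i j : Fin n) : Omega j i = -Omega i j := (neg_sub _ _).symm

lemma lie_omega_omega {i j k : Fin n} (hij : i ≠ j) (hjk : j ≠ k) (hik : i ≠ k) :
    ⁅Omega i j, Omega j k⁆ = Omega i k := by
  simp [Ring.lie_def, Omega, sub_mul, mul_sub, single_mul_single_of_ne, hij, hjk, hik,
    hij.symm, hjk.symm, hik.symm]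

lemma lie_omega_ecol {i j : Fin n} (hij : i ≠ j) : ⁅Omega i j, Ecol j⁆ = Ecol i := by
  simp [Ring.lie_def, Omega, Ecol, sub_mul, mul_sub, single_mul_single_of_ne, hij,
    (Fin.castSucc_ne_last _).symm]

@[simp]
lemma omega_apply_castSucc (i j a b : Fin n) :
    Omega i j a.castSucc b.castSucc = (if i = a ∧ j = b then 1 else 0) -
      (if j = a ∧ i = b then 1 else 0) := by
  simp [Omega, single_apply]

@[simp]
lemma omega_apply_last_left (i j : Fin n) (q : Fin (n + 1)) : Omega i j (Fin.last n) q = 0 := by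
  simp [Omega]

@[simp]
lemma omega_apply_last_right (i j : Fin n) (p : Fin (n + 1)) : Omega i j p (Fin.last n) = 0 := by
  simp [Omega]

@[simp]
lemma ecol_apply_castSucc (k a b : Fin n) : Ecol k a.castSucc b.castSucc = 0 := by
  simp [Ecol, (Fin.castSucc_ne_last _).symm]

@[simp]
lemma ecol_apply_last_left (k : Fin n) (q : Fin (n + 1)) : Ecol k (Fin.last n) q = 0 := by
  simp [Ecol]

@[simp]
lemma ecol_apply_castSucc_last (k a : Fin n) :
    Ecol k a.castSucc (Fin.last n) = if k = a then 1 else 0 := by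
  simp [Ecol, single_apply]

lemma omega_mem_seSet (i j : Fin n) : Omega i j ∈ seSet n := by
  refine ⟨omega_apply_last_left i j, fun a b => ?_⟩
  simp only [omega_apply_castSucc, neg_sub, and_comm]

lemma ecol_mem_seSet (k : Fin n) : Ecol k ∈ seSet n :=
  ⟨ecol_apply_last_left k, fun a b => by rw [ecol_apply_castSucc, ecol_apply_castSucc, neg_zero]⟩

lemma mul_apply_castSucc_of_mem_seSet {A B : Mat n} (hA : A ∈ seSet n) (hB : B ∈ seSet n)
    (a b : Fin n) : (A * B) a.castSucc b.castSucc = (B * A) b.castSucc a.castSucc := by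
  simp only [mul_apply, Fin.sum_univ_castSucc, hA.1, hB.1, mul_zero, add_zero, hA.2 a, hB.2 _ b]
  exact Finset.sum_congr rfl fun _ _ => by ring

lemma lie_mem_seSet {A B : Mat n} (hA : A ∈ seSet n) (hB : B ∈ seSet n) :
    ⁅A, B⁆ ∈ seSet n := by
  refine ⟨fun q => by simp [Ring.lie_def, mul_apply, hA.1, hB.1], fun a b => ?_⟩
  rw [Ring.lie_def, Matrix.sub_apply, Matrix.sub_apply, mul_apply_castSucc_of_mem_seSet hA hB a b,
    mul_apply_castSucc_of_mem_seSet hB hA a b, neg_sub]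

def seLie (n : ℕ) : LieSubalgebra ℝ (Mat n) :=
  { seL n with lie_mem' := lie_mem_seSet }

lemma eq_sum_omega_add_sum_ecol {M : Mat n} (hM : M ∈ seSet n) :
    M = (2⁻¹ : ℝ) • ∑ i, ∑ j, M i.castSucc j.castSucc • Omega i j +
      ∑ k, M k.castSucc (Fin.last n) • Ecol k := by
  ext p q
  induction p using Fin.lastCases with
  | last => simp [hM.1, Matrix.sum_apply]
  | cast a =>
    induction q using Fin.lastCases with
    | last => simp [Matrix.sum_apply]
    | cast b =>
      simp [Matrix.sum_apply, ite_and, mul_sub, Finset.sum_sub_distrib, hM.2 b a]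
      ring

lemma mem_of_mem_seSet {L : Submodule ℝ (Mat n)} (hΩ : ∀ i j, Omega i j ∈ L)
    (hE : ∀ k, Ecol k ∈ L) {M : Mat n} (hM : M ∈ seSet n) : M ∈ L := by
  rw [eq_sum_omega_add_sum_ecol hM]
  exact add_mem (L.smul_mem _ (sum_mem fun i _ => sum_mem fun j _ => L.smul_mem _ (hΩ i j)))
    (sum_mem fun k _ => L.smul_mem _ (hE k))

end Matrices

def Subalgebra.toLieSubalgebra {R A : Type*} [CommRing R] [Ring A] [Algebra R A]
    (S : Subalgebra R A) : LieSubalgebra R A where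
  toSubmodule := Subalgebra.toSubmodule S
  lie_mem' hx hy := by
    rw [Ring.lie_def]
    exact sub_mem (mul_mem hx hy) (mul_mem hy hx)

/-- The solid edges of `patternGraph Λ`, as a simple graph on `{1, …, n}`. -/
def solidGraph {n : ℕ} (Λ : Set (Fin (n + 1) × Fin (n + 1))) : SimpleGraph (Fin n) :=
  SimpleGraph.fromRel fun i j => (i.castSucc, j.castSucc) ∈ Λ

section Generation

variable {n : ℕ} {Λ : Set (Fin (n + 1) × Fin (n + 1))}

lemma genSet_subset_lieSpan :
    genSet Λ ⊆ LieSubalgebra.lieSpan ℝ (Mat n) (BLam Λ : Set (Mat n)) :=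
  fun _ hM => LieSubalgebra.subset_lieSpan (Submodule.subset_span hM)

lemma lieSpan_le_seLie : LieSubalgebra.lieSpan ℝ (Mat n) (BLam Λ : Set (Mat n)) ≤ seLie n := by
  refine LieSubalgebra.lieSpan_le.2 (Submodule.span_le.2 ?_)
  rintro _ (⟨i, j, -, rfl⟩ | ⟨k, -, rfl⟩)
  exacts [omega_mem_seSet i j, ecol_mem_seSet k]

theorem generatesSE_of_connected (hconn : (solidGraph Λ).Connected) {k : Fin n}
    (hk : (k.castSucc, Fin.last n) ∈ Λ) : GeneratesSE n Λ := by
  set L := LieSubalgebra.lieSpan ℝ (Mat n) (BLam Λ : Set (Mat n))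
  have hadj : ∀ i j, (solidGraph Λ).Adj i j → Omega i j ∈ L := by
    rintro i j ⟨-, hij | hji⟩
    · exact genSet_subset_lieSpan (Or.inl ⟨i, j, hij, rfl⟩)
    · rw [← neg_neg (Omega i j), ← omega_swap]
      exact neg_mem (genSet_subset_lieSpan (Or.inl ⟨j, i, hji, rfl⟩))
  have hΩ : ∀ i j, Omega i j ∈ L := by
    intro i j
    induction (reachable_iff_reflTransGen i j).1 (hconn.preconnected i j) with
    | refl => simp [omega_self]
    | @tail l m _ hlm ih =>
      by_cases him : i = m
      · simp [him, omega_self]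
      by_cases hil : i = l
      · exact hil ▸ hadj l m hlm
      · exact lie_omega_omega hil hlm.ne him ▸ L.lie_mem ih (hadj l m hlm)
  have hE : ∀ i, Ecol i ∈ L := by
    have hEk : Ecol k ∈ L := genSet_subset_lieSpan (Or.inr ⟨k, hk, rfl⟩)
    intro i
    by_cases h : i = k
    · rwa [h]
    · exact lie_omega_ecol h ▸ L.lie_mem (hΩ i k) hEk
  exact subset_antisymm (fun _ hM => lieSpan_le_seLie hM)
    (fun _ hM => mem_of_mem_seSet (L := L.toSubmodule) hΩ hE hM)

lemma omega_blockTriangular {α : Type*} [Preorder α] {b : Fin (n + 1) → α} {i j : Fin n}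
    (h : b i.castSucc = b j.castSucc) : (Omega i j).BlockTriangular b :=
  (blockTriangular_single h.le _).sub (blockTriangular_single h.ge _)

lemma ecol_blockTriangular {α : Type*} [Preorder α] {b : Fin (n + 1) → α} {k : Fin n}
    (h : b k.castSucc ≤ b (Fin.last n)) : (Ecol k).BlockTriangular b :=
  blockTriangular_single h _

/-- Block triangular matrices form an associative, hence a Lie, subalgebra. -/
lemma GeneratesSE.blockTriangular (h : GeneratesSE n Λ) {α : Type*} [LinearOrder α]
    {b : Fin (n + 1) → α} (hb : ∀ M ∈ genSet Λ, M.BlockTriangular b) {M : Mat n}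
    (hM : M ∈ seSet n) : M.BlockTriangular b := by
  have hle : LieSubalgebra.lieSpan ℝ (Mat n) (BLam Λ : Set (Mat n)) ≤
      (blockTriangularSubalgebra ℝ ℝ b).toLieSubalgebra :=
    LieSubalgebra.lieSpan_le.2 (Submodule.span_le.2 hb)
  rw [← h] at hM
  exact hle hM

theorem GeneratesSE.exists_broken [NeZero n] (h : GeneratesSE n Λ) :
    ∃ k : Fin n, (k.castSucc, Fin.last n) ∈ Λ := by
  by_contra! hΛ
  -- `b` puts `n+1` below all other indices, so no `E_{k,n+1}` is block triangular
  let b : Fin (n + 1) → ℕ := Fin.lastCases 0 fun _ => 1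
  have hb : ∀ M ∈ genSet Λ, M.BlockTriangular b := by
    rintro _ (⟨i, j, -, rfl⟩ | ⟨k, hk, -⟩)
    · exact omega_blockTriangular (by simp [b])
    · exact absurd hk (hΛ k)
  obtain ⟨k⟩ : Nonempty (Fin n) := inferInstance
  have := h.blockTriangular hb (ecol_mem_seSet k) (i := k.castSucc) (j := Fin.last n)
  simp [b] at this

theorem GeneratesSE.connected_solidGraph [NeZero n] (h : GeneratesSE n Λ) :
    (solidGraph Λ).Connected := by
  classical
  refine (connected_iff _).2 ⟨fun a c => ?_, inferInstance⟩
  by_contra hac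
  -- blocks: the component of `a`, the rest of `{1, …, n}`, then the index `n+1`
  let b : Fin (n + 1) → ℕ :=
    Fin.lastCases 2 fun i => if (solidGraph Λ).Reachable a i then 0 else 1
  have hb : ∀ M ∈ genSet Λ, M.BlockTriangular b := by
    rintro _ (⟨i, j, hij, rfl⟩ | ⟨k, -, rfl⟩)
    · refine omega_blockTriangular ?_
      by_cases hne : i = j
      · rw [hne]
      · have hadj : (solidGraph Λ).Adj i j := ⟨hne, Or.inl hij⟩
        have hiff : (solidGraph Λ).Reachable a i ↔ (solidGraph Λ).Reachable a j :=
          ⟨fun h => h.trans hadj.reachable, fun h => h.trans hadj.symm.reachable⟩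
        simp [b, hiff]
    · refine ecol_blockTriangular ?_
      simp only [b, Fin.lastCases_castSucc, Fin.lastCases_last]
      split_ifs <;> omega
  have hca : c ≠ a := by rintro rfl; exact hac (Reachable.refl c)
  have := h.blockTriangular hb (omega_mem_seSet a c) (i := c.castSucc) (j := a.castSucc)
  simp [b, hac, hca] at this

theorem generatesSE_iff [NeZero n] :
    GeneratesSE n Λ ↔ (solidGraph Λ).Connected ∧ ∃ k : Fin n, (k.castSucc, Fin.last n) ∈ Λ :=
  ⟨fun h => ⟨h.connected_solidGraph, h.exists_broken⟩,
    fun ⟨hconn, _, hk⟩ => generatesSE_of_connected hconn hk⟩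

end Generation

lemma finsum_mem_le_finsum_mem_of_subset {α M : Type*} [AddCommMonoid M] [PartialOrder M]
    [IsOrderedAddMonoid M] {f : α → M} {s t : Set α} (ht : t.Finite) (hst : s ⊆ t)
    (hf : ∀ x ∈ t, 0 ≤ f x) : ∑ᶠ x ∈ s, f x ≤ ∑ᶠ x ∈ t, f x := by
  rw [finsum_mem_eq_finite_toFinset_sum f (ht.subset hst), finsum_mem_eq_finite_toFinset_sum f ht]
  exact Finset.sum_le_sum_of_subset_of_nonneg (Set.Finite.toFinset_subset_toFinset.2 hst)
    fun x hx _ => hf x (ht.mem_toFinset.1 hx)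

lemma Set.Finite.isLeast_csInf {α : Type*} [ConditionallyCompleteLinearOrder α] {s : Set α}
    (hs : s.Finite) (hne : s.Nonempty) : IsLeast s (sInf s) :=
  ⟨hne.csInf_mem hs, fun _ hx => csInf_le hs.bddBelow hx⟩

section Cost

variable {n : ℕ}

noncomputable def graphCost (c : Fin (n + 1) × Fin (n + 1) → ℝ) (T : SimpleGraph (Fin n)) : ℝ :=
  ∑ᶠ e ∈ {e : Fin n × Fin n | e.1 < e.2 ∧ T.Adj e.1 e.2}, c (e.1.castSucc, e.2.castSucc)

def graphPattern (T : SimpleGraph (Fin n)) (k : Fin n) : Set (Fin (n + 1) × Fin (n + 1)) :=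
  Prod.map Fin.castSucc Fin.castSucc '' {e | e.1 < e.2 ∧ T.Adj e.1 e.2} ∪
    {(k.castSucc, Fin.last n)}

variable (T : SimpleGraph (Fin n)) (k : Fin n)

lemma indexSet_graphPattern : IndexSet (graphPattern T k) := by
  rintro _ (⟨e, ⟨he, -⟩, rfl⟩ | rfl)
  exacts [Fin.castSucc_lt_castSucc_iff.2 he, Fin.castSucc_lt_last k]

lemma le_solidGraph_graphPattern : T ≤ solidGraph (graphPattern T k) := by
  intro i j hij
  refine ⟨hij.ne, ?_⟩
  rcases hij.ne.lt_or_gt with h | h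
  · exact Or.inl (Or.inl ⟨(i, j), ⟨h, hij⟩, rfl⟩)
  · exact Or.inr (Or.inl ⟨(j, i), ⟨h, hij.symm⟩, rfl⟩)

lemma finsum_graphPattern (c : Fin (n + 1) × Fin (n + 1) → ℝ) :
    ∑ᶠ e ∈ graphPattern T k, c e = graphCost c T + c (k.castSucc, Fin.last n) := by
  have hinj : Function.Injective (Prod.map (Fin.castSucc (n := n)) Fin.castSucc) :=
    Fin.castSucc_injective n |>.prodMap (Fin.castSucc_injective n)
  have hdisj : Disjoint (Prod.map Fin.castSucc Fin.castSucc '' {e | e.1 < e.2 ∧ T.Adj e.1 e.2})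
      {(k.castSucc, Fin.last n)} := by
    simp [Fin.castSucc_ne_last]
  rw [graphPattern, finsum_mem_union hdisj (Set.toFinite _) (Set.toFinite _),
    finsum_mem_image hinj.injOn, finsum_mem_singleton]
  rfl

lemma graphPattern_subset {Λ : Set (Fin (n + 1) × Fin (n + 1))} (hΛ : IndexSet Λ)
    (hT : T ≤ solidGraph Λ) (hk : (k.castSucc, Fin.last n) ∈ Λ) : graphPattern T k ⊆ Λ := by
  rintro _ (⟨⟨i, j⟩, ⟨hij, hadj⟩, rfl⟩ | rfl)
  · obtain ⟨-, h | h⟩ := hT hadj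
    · exact h
    · exact absurd (hΛ _ h) (Fin.castSucc_lt_castSucc_iff.not.2 hij.asymm)
  · exact hk

end Cost

/-- For positive costs c, the minimum of the total cost
`Σ_{(i,j)∈Λ} c(i,j)` over index sets Λ with B_Λ generating se(n) as a Lie algebra equals
(the minimum total edge weight of a spanning tree of the complete graph on {1,…,n})
plus `min_{1≤k≤n} c(k,n+1)`. -/
theorem stmt13 (n : ℕ) (hn : 1 ≤ n) (c : Fin (n + 1) × Fin (n + 1) → ℝ)
    (hc : ∀ p q : Fin (n + 1), p < q → 0 < c (p, q)) :
    IsLeast {x : ℝ | ∃ Λ : Set (Fin (n + 1) × Fin (n + 1)),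
        IndexSet Λ ∧ GeneratesSE n Λ ∧ x = ∑ᶠ e ∈ Λ, c e}
      (sInf {w : ℝ | ∃ T : SimpleGraph (Fin n), T.Connected ∧ T.IsAcyclic ∧
          w = ∑ᶠ e ∈ {e : Fin n × Fin n | e.1 < e.2 ∧ T.Adj e.1 e.2},
                c (e.1.castSucc, e.2.castSucc)} +
       sInf {w : ℝ | ∃ k : Fin n, w = c (k.castSucc, Fin.last n)}) := by
  have : NeZero n := ⟨by omega⟩
  obtain ⟨T, -, hT⟩ := (connected_top (V := Fin n)).exists_isTree_le
  obtain ⟨⟨T₀, hT₀, -, hT₀min⟩, hTmin⟩ : IsLeast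
      {w | ∃ T : SimpleGraph (Fin n), T.Connected ∧ T.IsAcyclic ∧ w = graphCost c T} (sInf _) :=
    Set.Finite.isLeast_csInf
      ((Set.finite_range (graphCost c)).subset fun _ ⟨T, _, _, hw⟩ => ⟨T, hw.symm⟩)
      ⟨_, T, hT.connected, hT.isAcyclic, rfl⟩
  obtain ⟨⟨k₀, hk₀min⟩, hkmin⟩ : IsLeast
      {w | ∃ k : Fin n, w = c (k.castSucc, Fin.last n)} (sInf _) :=
    Set.Finite.isLeast_csInf
      ((Set.finite_range fun k : Fin n => c (k.castSucc, Fin.last n)).subset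
        fun _ ⟨k, hw⟩ => ⟨k, hw.symm⟩) ⟨_, 0, rfl⟩
  constructor
  · refine ⟨graphPattern T₀ k₀, indexSet_graphPattern T₀ k₀, generatesSE_iff.2
      ⟨hT₀.mono (le_solidGraph_graphPattern T₀ k₀), k₀, Or.inr rfl⟩, ?_⟩
    rw [finsum_graphPattern, ← hT₀min, ← hk₀min]
    rfl
  · rintro _ ⟨Λ, hΛ, hgen, rfl⟩
    obtain ⟨hconn, k, hk⟩ := generatesSE_iff.1 hgen
    obtain ⟨T, hTΛ, hT⟩ := hconn.exists_isTree_le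
    calc _ ≤ graphCost c T + c (k.castSucc, Fin.last n) :=
          add_le_add (hTmin ⟨T, hT.connected, hT.isAcyclic, rfl⟩) (hkmin ⟨k, rfl⟩)
      _ = ∑ᶠ e ∈ graphPattern T k, c e := (finsum_graphPattern T k c).symm
      _ ≤ ∑ᶠ e ∈ Λ, c e := finsum_mem_le_finsum_mem_of_subset (Set.toFinite Λ)
          (graphPattern_subset T k hΛ hTΛ hk) fun e he => (hc _ _ (hΛ e he)).le
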